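/- arXiv:2002.11582 — 3 statements merged into one kernel-verified Lean document; each statement's English description precedes it below -/
import Mathlib

section
/- Let f : ℝ^d → ℝ have L-Lipschitz continuous gradient and g : ℝ^d → ℝ be convex. Let F = f + g, η ∈ (0, 1/L], and x⁺ := prox_{ηg}(x − η∇f(x)). Then F(x⁺) ≤ F(x) − (η/2)‖G_η(x, ∇f(x))‖², where G_η(x,u) := (1/η)(x − prox_{ηg}(x − ηu)). -/
/-!
The descent lemma bounds `f x⁺` by the quadratic model of `f` at `x` with curvature `L ≤ 1 / η`.
Minimality of `x⁺` in the prox problem makes `(x - η ∇f x - x⁺) / η` a subgradient of `g` at `x⁺`,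
which bounds `g x⁺`. Adding the two bounds, the terms linear in `∇f x` cancel, leaving
`F x⁺ ≤ F x - (1 / η - L / 2) ‖x⁺ - x‖² ≤ F x - ‖x⁺ - x‖² / (2 η)`.
-/

open RealInnerProductSpace Set Filter Topology

lemma le_of_forall_mem_Ioc_le_add_mul {a b c : ℝ} (h : ∀ t ∈ Ioc (0 : ℝ) 1, a ≤ b + t * c) :
    a ≤ b := by
  have hlim : Tendsto (fun t : ℝ => b + t * c) (𝓝[>] 0) (𝓝 b) :=
    tendsto_nhdsWithin_of_tendsto_nhds <| by
      simpa using ((continuous_id.mul continuous_const).const_add b).tendsto (0 : ℝ)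
  exact ge_of_tendsto hlim (eventually_of_mem (Ioc_mem_nhdsGT zero_lt_one) h)

variable {E : Type*} [NormedAddCommGroup E] [InnerProductSpace ℝ E]

theorem HasGradientAt.hasDerivAt_add_smul [CompleteSpace E] {f : E → ℝ} {f' x v : E} {t : ℝ}
    (hf : HasGradientAt f f' (x + t • v)) :
    HasDerivAt (fun s : ℝ => f (x + s • v)) ⟪f', v⟫ t := by
  have hline : HasDerivAt (fun s : ℝ => x + s • v) v t := by
    simpa using ((hasDerivAt_id t).smul_const v).const_add x
  simpa [Function.comp_def] using hf.hasFDerivAt.comp_hasDerivAt t hline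

theorem le_add_inner_add_sq_norm_of_lipschitz_gradient [CompleteSpace E] {L : ℝ}
    {f : E → ℝ} {f' : E → E} (hf : ∀ y, HasGradientAt f (f' y) y)
    (hlip : ∀ y z, ‖f' y - f' z‖ ≤ L * ‖y - z‖) (x y : E) :
    f y ≤ f x + ⟪f' x, y - x⟫ + L / 2 * ‖y - x‖ ^ 2 := by
  set v := y - x
  let φ : ℝ → ℝ := fun t => f (x + t • v) - t * ⟪f' x, v⟫ - L / 2 * t ^ 2 * ‖v‖ ^ 2
  have hφ : ∀ t, HasDerivAt φ (⟪f' (x + t • v) - f' x, v⟫ - L * t * ‖v‖ ^ 2) t := fun t => by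
    refine ((((hf (x + t • v)).hasDerivAt_add_smul (x := x) (v := v)).sub
      ((hasDerivAt_id t).mul_const ⟪f' x, v⟫)).sub
      (((hasDerivAt_pow 2 t).const_mul (L / 2)).mul_const (‖v‖ ^ 2))).congr_deriv ?_
    rw [inner_sub_left]
    push_cast
    ring
  have hφ_anti : AntitoneOn φ (Icc 0 1) := by
    refine antitoneOn_of_deriv_nonpos (convex_Icc 0 1)
      (continuous_iff_continuousAt.2 fun t => (hφ t).continuousAt).continuousOn
      (fun t _ => (hφ t).differentiableAt.differentiableWithinAt) fun t ht => ?_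
    rw [interior_Icc] at ht
    have hgrad : ‖f' (x + t • v) - f' x‖ ≤ L * (t * ‖v‖) := by
      simpa [norm_smul, abs_of_pos ht.1] using hlip (x + t • v) x
    calc deriv φ t = ⟪f' (x + t • v) - f' x, v⟫ - L * t * ‖v‖ ^ 2 := (hφ t).deriv
      _ ≤ ‖f' (x + t • v) - f' x‖ * ‖v‖ - L * t * ‖v‖ ^ 2 := by
        gcongr
        exact real_inner_le_norm _ _
      _ ≤ 0 := by nlinarith [mul_le_mul_of_nonneg_right hgrad (norm_nonneg v)]
  have hφ0 : φ 0 = f x := by simp [φ]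
  have hφ1 : φ 1 = f y - ⟪f' x, y - x⟫ - L / 2 * ‖y - x‖ ^ 2 := by simp [φ, v]
  have := hφ_anti (left_mem_Icc.2 zero_le_one) (right_mem_Icc.2 zero_le_one) zero_le_one
  rw [hφ0, hφ1] at this
  linarith

theorem ConvexOn.le_add_inner_of_isMinOn_add_sq_norm {g : E → ℝ} (hg : ConvexOn ℝ univ g)
    {η : ℝ} {v p : E} (hp : IsMinOn (fun w => g w + (1 / (2 * η)) * ‖w - v‖ ^ 2) univ p) (x : E) :
    g p ≤ g x + (1 / η) * ⟪p - v, x - p⟫ := by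
  -- compare `p` with the points `p + t (x - p)` and let `t → 0⁺`
  refine le_of_forall_mem_Ioc_le_add_mul (c := ‖x - p‖ ^ 2 / (2 * η)) fun t ⟨ht0, ht1⟩ => ?_
  have hseg : g (p + t • (x - p)) ≤ (1 - t) * g p + t * g x := by
    have := hg.2 (mem_univ p) (mem_univ x) (sub_nonneg.2 ht1) ht0.le (sub_add_cancel 1 t)
    rwa [smul_eq_mul, smul_eq_mul, ← show p + t • (x - p) = (1 - t) • p + t • x by module]
      at this
  have hexpand : ‖p + t • (x - p) - v‖ ^ 2 =
      ‖p - v‖ ^ 2 + 2 * t * ⟪p - v, x - p⟫ + t ^ 2 * ‖x - p‖ ^ 2 := by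
    rw [add_sub_right_comm, norm_add_sq_real, real_inner_smul_right, norm_smul,
      Real.norm_eq_abs, abs_of_pos ht0]
    ring
  have hmin := isMinOn_univ_iff.1 hp (p + t • (x - p))
  simp only [hexpand] at hmin
  rw [← mul_le_mul_iff_right₀ ht0]
  linear_combination hmin + hseg

/-- Proximal gradient descent step decrease. With `∇f` `L`-Lipschitz,
`g` convex, `F = f + g`, `η ∈ (0, 1/L]`, and `x⁺ = prox_{ηg}(x - η∇f(x))`:
`F(x⁺) ≤ F(x) - (η/2)‖G_η(x, ∇f(x))‖²`, where `G_η(x,u) = (1/η)(x - prox_{ηg}(x - ηu))`. -/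
theorem prox_gradient_descent_step {d : ℕ} (L : ℝ) (hL : 0 < L)
    (f g : EuclideanSpace ℝ (Fin d) → ℝ)
    (f' : EuclideanSpace ℝ (Fin d) → EuclideanSpace ℝ (Fin d))
    (hf : ∀ y, HasGradientAt f (f' y) y)
    (hlip : ∀ y z : EuclideanSpace ℝ (Fin d), ‖f' y - f' z‖ ≤ L * ‖y - z‖)
    (hg_conv : ConvexOn ℝ Set.univ g)
    (η : ℝ) (hη : 0 < η) (hηL : η ≤ 1 / L)
    (x xplus : EuclideanSpace ℝ (Fin d))
    (hxplus : ∀ w : EuclideanSpace ℝ (Fin d),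
      g xplus + (1 / (2 * η)) * ‖xplus - (x - η • f' x)‖ ^ 2 ≤
        g w + (1 / (2 * η)) * ‖w - (x - η • f' x)‖ ^ 2) :
    f xplus + g xplus ≤ f x + g x - (η / 2) * ‖(1 / η) • (x - xplus)‖ ^ 2 := by
  have hf_step := le_add_inner_add_sq_norm_of_lipschitz_gradient hf hlip x xplus
  have hg_step := hg_conv.le_add_inner_of_isMinOn_add_sq_norm (isMinOn_univ_iff.2 hxplus) x
  have hinner : (1 / η) * ⟪xplus - (x - η • f' x), x - xplus⟫ =
      -⟪f' x, xplus - x⟫ - ‖xplus - x‖ ^ 2 / η := by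
    rw [show xplus - (x - η • f' x) = (xplus - x) + η • f' x by abel, ← neg_sub xplus x,
      inner_neg_right, inner_add_left, real_inner_smul_left, real_inner_self_eq_norm_sq,
      real_inner_comm]
    field_simp
    ring
  have hnorm : ‖(1 / η) • (x - xplus)‖ ^ 2 = ‖xplus - x‖ ^ 2 / η ^ 2 := by
    rw [norm_smul, norm_sub_rev, mul_pow, Real.norm_eq_abs, abs_of_pos (one_div_pos.2 hη)]
    ring
  have hLη : L * η ≤ 1 := by rwa [le_div_iff₀ hL, mul_comm] at hηL
  have hquad : L / 2 * ‖xplus - x‖ ^ 2 ≤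
      ‖xplus - x‖ ^ 2 / η - (η / 2) * (‖xplus - x‖ ^ 2 / η ^ 2) := by
    field_simp
    nlinarith [mul_le_mul_of_nonneg_left hLη (sq_nonneg ‖xplus - x‖)]
  rw [hinner] at hg_step
  rw [hnorm]
  linarith
end

section
/- Let (a_t) be a nonnegative real sequence satisfying a_{t+1} ≤ a_t − c·a_t^{2(1−θ)} for all t ≥ t₀, where c > 0 and θ ∈ (0, 1/2). Then there exists a constant C > 0 such that a_t ≤ C·(t − t₀)^{−1/(1−2θ)} for all t > t₀. -/
/-!
Put `ν = 1 - 2θ > 0`, so that the recursion reads `a (t+1) ≤ a t - c * a t ^ (1 + ν)`. Since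
`z ↦ z ^ (-ν)` lies above its tangent lines, each step raises `a t ^ (-ν)` by at least `c * ν`;
hence `a t ^ (-ν) ≥ c * ν * (t - t₀)`, and inverting gives `a t ≤ (c * ν * (t - t₀)) ^ (-1 / ν)`.
A zero term satisfies the bound trivially, and a positive term has only positive predecessors.
-/

open Real

theorem one_add_mul_one_sub_le_rpow_neg {r ν : ℝ} (hr : 0 < r) (hν : 0 ≤ ν) :
    1 + ν * (1 - r) ≤ r ^ (-ν) :=
  calc 1 + ν * (1 - r) ≤ -ν * log r + 1 := by nlinarith [log_le_sub_one_of_pos hr]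
    _ ≤ exp (-ν * log r) := add_one_le_exp _
    _ = r ^ (-ν) := by rw [rpow_def_of_pos hr, mul_comm]

theorem rpow_neg_add_mul_le_of_le_sub_mul_rpow {c ν x y : ℝ} (hν : 0 ≤ ν) (hx : 0 < x)
    (hy : 0 < y) (h : y ≤ x - c * x ^ (1 + ν)) : x ^ (-ν) + c * ν ≤ y ^ (-ν) := by
  have hdrop : c * x ^ ν ≤ 1 - y / x := by
    rw [rpow_one_add' hx.le (by linarith)] at h
    rw [le_sub_comm, div_le_iff₀ hx]
    linear_combination h
  have hinv : x ^ (-ν) * x ^ ν = 1 := by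
    rw [rpow_neg hx.le, inv_mul_cancel₀ (rpow_pos_of_pos hx ν).ne']
  calc x ^ (-ν) + c * ν = x ^ (-ν) * (1 + ν * (c * x ^ ν)) := by
        linear_combination (-(c * ν)) * hinv
    _ ≤ x ^ (-ν) * (1 + ν * (1 - y / x)) := by gcongr
    _ ≤ x ^ (-ν) * (y / x) ^ (-ν) := by
        gcongr; exact one_add_mul_one_sub_le_rpow_neg (div_pos hy hx) hν
    _ = y ^ (-ν) := by
        rw [div_rpow hy.le hx.le, mul_div_cancel₀ _ (rpow_pos_of_pos hx _).ne']

section Recursion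

variable {a : ℕ → ℝ} {c ν : ℝ} {t₀ : ℕ} (ha : ∀ t, 0 ≤ a t)
  (hrec : ∀ t, t₀ ≤ t → a (t + 1) ≤ a t - c * a t ^ (1 + ν))
include ha hrec

theorem mul_sub_le_rpow_neg_of_le_sub_mul_rpow (hν : 0 ≤ ν) {t : ℕ} (ht : t₀ ≤ t)
    (hpos : 0 < a t) : c * ν * ((t : ℝ) - t₀) ≤ a t ^ (-ν) := by
  induction t, ht using Nat.le_induction with
  | base => simpa using (rpow_pos_of_pos hpos _).le
  | succ n hn ih =>
    have hn_pos : 0 < a n := by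
      refine (ha n).lt_of_ne fun h0 => ?_
      have := hrec n hn
      rw [← h0, zero_rpow (by linarith)] at this
      linarith
    have hstep := rpow_neg_add_mul_le_of_le_sub_mul_rpow hν hn_pos hpos (hrec n hn)
    push_cast
    linarith [ih hn_pos]

theorem le_mul_rpow_of_le_sub_mul_rpow (hc : 0 < c) (hν : 0 < ν) {t : ℕ} (ht : t₀ < t) :
    a t ≤ (c * ν) ^ (-(1 / ν)) * ((t : ℝ) - t₀) ^ (-(1 / ν)) := by
  have htt₀ : (0 : ℝ) < t - t₀ := sub_pos.2 (by exact_mod_cast ht)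
  rcases (ha t).eq_or_lt with h0 | hpos
  · rw [← h0]; positivity
  rw [← mul_rpow (by positivity) htt₀.le, show -(1 / ν) = (-ν)⁻¹ by rw [one_div, inv_neg]]
  exact (le_rpow_inv_iff_of_neg hpos (by positivity) (by linarith)).2
    (mul_sub_le_rpow_neg_of_le_sub_mul_rpow ha hrec hν.le ht.le hpos)

end Recursion

/-- Sublinear rate from the KŁ recursion with exponent `θ ∈ (0, 1/2)`:
if `a_{t+1} ≤ a_t - c·a_t^{2(1-θ)}` for `t ≥ t₀`, `a_t ≥ 0`, `c > 0`, then
`a_t ≤ C·(t - t₀)^{-1/(1-2θ)}` for all `t > t₀`, for some `C > 0`. -/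
theorem sublinear_rate_KL_recursion (a : ℕ → ℝ) (ha : ∀ t, 0 ≤ a t)
    (c θ : ℝ) (hc : 0 < c) (hθ : θ ∈ Set.Ioo (0 : ℝ) (1 / 2)) (t₀ : ℕ)
    (hrec : ∀ t, t₀ ≤ t → a (t + 1) ≤ a t - c * (a t) ^ (2 * (1 - θ))) :
    ∃ C : ℝ, 0 < C ∧ ∀ t, t₀ < t → a t ≤ C * ((t : ℝ) - t₀) ^ (-(1 / (1 - 2 * θ))) := by
  have hν : 0 < 1 - 2 * θ := by linarith [hθ.2]
  rw [show 2 * (1 - θ) = 1 + (1 - 2 * θ) by ring] at hrec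
  exact ⟨_, rpow_pos_of_pos (mul_pos hc hν) _,
    fun t ht => le_mul_rpow_of_le_sub_mul_rpow ha hrec hc hν ht⟩
end

section
/- Suppose a nonnegative sequence (r_t) satisfies r_t ≤ Σ_{s=t}^∞ b_s for all t, where b_s ≥ 0 and Σ b_s < ∞, and additionally Σ_{s=t}^∞ b_s ≤ M·b_{t−1}^{θ/(1−θ)} for some M > 0 and θ ∈ (0, 1/2) eventually. Then r_t ≤ Θ(t^{−θ/(1−2θ)}) as t → ∞. -/
/-!
With `q = (1 - 2θ) / θ`, so that `(q + 1) · θ / (1 - θ) = 1`, the hypothesis on the tails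
`S t = ∑_{s ≥ t} b s` reads `S (t + 1) ^ (q + 1) ≤ K · (S t - S (t + 1))` eventually.
Along such a recursion `S t ^ (-q)` increases by a fixed `c > 0` per step: when
`S (t + 1) ≥ S t / 2` by the tangent-line bound for the convex map `x ↦ x ^ (-q)`, and
otherwise because `S (t + 1) ^ (-q) ≥ 2 ^ q · S t ^ (-q)`. Hence `S t ^ (-q) ≥ c t`, that is
`S t ≤ (c t) ^ (-1 / q)` with `1 / q = θ / (1 - 2θ)`.
-/

open Real

lemma one_add_mul_one_sub_le_rpow_neg_s17 {q u : ℝ} (hq : 0 ≤ q) (hu : 0 < u) :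
    1 + q * (1 - u) ≤ u ^ (-q) := by
  have hlog : log u ≤ u - 1 := log_le_sub_one_of_pos hu
  calc 1 + q * (1 - u) ≤ log u * -q + 1 := by nlinarith
    _ ≤ u ^ (-q) := by rw [rpow_def_of_pos hu]; exact add_one_le_exp _

lemma rpow_neg_add_le_of_half_le {q K x y : ℝ} (hq : 0 ≤ q) (hK : 0 < K) (hy : 0 < y)
    (hxy : x / 2 ≤ y) (hyx : y ≤ x) (hrec : y ^ (q + 1) ≤ K * (x - y)) :
    x ^ (-q) + q / (2 ^ (q + 1) * K) ≤ y ^ (-q) := by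
  have hx : 0 < x := hy.trans_le hyx
  have hdrop : x ^ (q + 1) / 2 ^ (q + 1) ≤ K * (x - y) := by
    rw [← div_rpow hx.le zero_le_two]
    exact (rpow_le_rpow (by positivity) hxy (by linarith)).trans hrec
  have hgain : q / (2 ^ (q + 1) * K) ≤ x ^ (-q) * (q * (1 - y / x)) := by
    have hx_neg : x ^ (-q) = x / x ^ (q + 1) := by
      rw [eq_div_iff (by positivity), ← rpow_add hx]; simp
    have hx1 : 0 < x ^ (q + 1) := by positivity
    rw [div_le_iff₀ (by positivity)] at hdrop
    rw [hx_neg, div_le_iff₀ (by positivity)]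
    field_simp
    nlinarith [mul_le_mul_of_nonneg_left hdrop hq]
  calc x ^ (-q) + q / (2 ^ (q + 1) * K) ≤ x ^ (-q) * (1 + q * (1 - y / x)) := by linarith
    _ ≤ x ^ (-q) * (y / x) ^ (-q) :=
        mul_le_mul_of_nonneg_left (one_add_mul_one_sub_le_rpow_neg_s17 hq (by positivity))
          (by positivity)
    _ = y ^ (-q) := by rw [div_rpow hy.le hx.le, mul_div_cancel₀ _ (by positivity)]

lemma rpow_neg_add_le_of_le_half {q x y B : ℝ} (hq : 0 ≤ q) (hy : 0 < y) (hxy : y ≤ x / 2)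
    (hxB : x ≤ B) : x ^ (-q) + (2 ^ q - 1) * B ^ (-q) ≤ y ^ (-q) := by
  have hx : 0 < x := by linarith
  have hB : B ^ (-q) ≤ x ^ (-q) := rpow_le_rpow_of_nonpos hx hxB (by linarith)
  have h2q : 1 ≤ (2 : ℝ) ^ q := one_le_rpow one_le_two hq
  calc x ^ (-q) + (2 ^ q - 1) * B ^ (-q) ≤ 2 ^ q * x ^ (-q) := by nlinarith
    _ = (x / 2) ^ (-q) := by
        rw [div_rpow hx.le zero_le_two, rpow_neg zero_le_two, div_inv_eq_mul, mul_comm]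
    _ ≤ y ^ (-q) := rpow_le_rpow_of_nonpos hy hxy (by linarith)

lemma exists_pos_rpow_neg_add_le {q K B : ℝ} (hq : 0 < q) (hK : 0 < K) (hB : 0 < B) :
    ∃ c > 0, ∀ x y, 0 < y → y ≤ x → x ≤ B → y ^ (q + 1) ≤ K * (x - y) →
      x ^ (-q) + c ≤ y ^ (-q) := by
  have h2q : 1 < (2 : ℝ) ^ q := one_lt_rpow one_lt_two hq
  refine ⟨min (q / (2 ^ (q + 1) * K)) ((2 ^ q - 1) * B ^ (-q)),
    lt_min (by positivity) (mul_pos (by linarith) (by positivity)), fun x y hy hyx hxB hrec => ?_⟩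
  rcases le_total (x / 2) y with hxy | hxy
  · exact (add_le_add_right (min_le_left _ _) _).trans
      (rpow_neg_add_le_of_half_le hq.le hK hy hxy hyx hrec)
  · exact (add_le_add_right (min_le_right _ _) _).trans
      (rpow_neg_add_le_of_le_half hq.le hy hxy hxB)

section TailRecursion

variable {S : ℕ → ℝ} {q K : ℝ}

lemma antitone_of_rpow_succ_le (hK : 0 < K) (hS : ∀ n, 0 ≤ S n)
    (hrec : ∀ n, S (n + 1) ^ (q + 1) ≤ K * (S n - S (n + 1))) : Antitone S :=
  antitone_nat_of_succ_le fun n => sub_nonneg.mp <|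
    nonneg_of_mul_nonneg_right ((rpow_nonneg (hS (n + 1)) _).trans (hrec n)) hK

lemma exists_pos_natCast_mul_le_rpow_neg (hq : 0 < q) (hK : 0 < K) (hS : ∀ n, 0 ≤ S n)
    (hrec : ∀ n, S (n + 1) ^ (q + 1) ≤ K * (S n - S (n + 1))) :
    ∃ c > 0, ∀ n : ℕ, 0 < S n → n * c ≤ S n ^ (-q) := by
  have hanti := antitone_of_rpow_succ_le hK hS hrec
  obtain ⟨c, hc, hstep⟩ := exists_pos_rpow_neg_add_le hq hK (B := S 0 + 1) (by linarith [hS 0])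
  refine ⟨c, hc, fun n => ?_⟩
  induction n with
  | zero => intro _; simpa using rpow_nonneg (hS 0) _
  | succ n ih =>
    intro hpos
    have hle := hanti n.le_succ
    have hgain := hstep (S n) (S (n + 1)) hpos hle (by linarith [hanti n.zero_le]) (hrec n)
    push_cast
    linarith [ih (hpos.trans_le hle)]

lemma exists_pos_le_mul_rpow_neg_inv (hq : 0 < q) (hK : 0 < K) (hS : ∀ n, 0 ≤ S n)
    (hrec : ∀ n, S (n + 1) ^ (q + 1) ≤ K * (S n - S (n + 1))) :
    ∃ C > 0, ∀ n : ℕ, 1 ≤ n → S n ≤ C * (n : ℝ) ^ (-q⁻¹) := by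
  obtain ⟨c, hc, hgrowth⟩ := exists_pos_natCast_mul_le_rpow_neg hq hK hS hrec
  refine ⟨c ^ (-q⁻¹), by positivity, fun n hn => ?_⟩
  rcases (hS n).eq_or_lt with h0 | hpos
  · rw [← h0]; positivity
  have hn' : (0 : ℝ) < n := by exact_mod_cast hn
  calc S n = (S n ^ (-q)) ^ (-q⁻¹) := by
        rw [← rpow_mul (hS n), neg_mul_neg, mul_inv_cancel₀ hq.ne', rpow_one]
    _ ≤ (n * c) ^ (-q⁻¹) :=
        rpow_le_rpow_of_nonpos (by positivity) (hgrowth n hpos) (by simp [hq.le])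
    _ = c ^ (-q⁻¹) * (n : ℝ) ^ (-q⁻¹) := by rw [mul_rpow hn'.le hc.le, mul_comm]

end TailRecursion

lemma le_mul_rpow_neg_of_le_mul_rpow_neg_add {u : ℕ → ℝ} {C a : ℝ} {T : ℕ} (hC : 0 ≤ C)
    (ha : 0 ≤ a) (h : ∀ n : ℕ, 1 ≤ n → u (T + n) ≤ C * (n : ℝ) ^ (-a)) (t : ℕ)
    (ht : 2 * T + 1 ≤ t) : u t ≤ 2 ^ a * C * (t : ℝ) ^ (-a) := by
  obtain ⟨n, rfl⟩ : ∃ n, t = T + n := ⟨t - T, by omega⟩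
  have hhalf : ((T + n : ℕ) : ℝ) / 2 ≤ n := by
    rw [div_le_iff₀ two_pos]; exact_mod_cast (by omega : T + n ≤ n * 2)
  have ht0 : (0 : ℝ) < (T + n : ℕ) := by exact_mod_cast (by omega : 0 < T + n)
  calc u (T + n) ≤ C * (n : ℝ) ^ (-a) := h n (by omega)
    _ ≤ C * (((T + n : ℕ) : ℝ) / 2) ^ (-a) :=
        mul_le_mul_of_nonneg_left (rpow_le_rpow_of_nonpos (by positivity) hhalf (by linarith)) hC
    _ = 2 ^ a * C * ((T + n : ℕ) : ℝ) ^ (-a) := by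
        rw [div_rpow ht0.le zero_le_two, rpow_neg zero_le_two, div_inv_eq_mul]; ring

lemma tsum_nat_add_sub_tsum_succ_add {b : ℕ → ℝ} (hb : Summable b) (t : ℕ) :
    ∑' s, b (t + s) - ∑' s, b (t + 1 + s) = b t := by
  have htail : Summable fun s => b (t + s) := by
    simpa only [add_comm t] using (summable_nat_add_iff t).mpr hb
  rw [htail.tsum_eq_zero_add]
  simp only [add_zero, ← add_assoc, add_right_comm t, add_sub_cancel_right]

lemma rpow_le_rpow_mul_of_le_mul_rpow {x y M α p : ℝ} (hx : 0 ≤ x) (hy : 0 ≤ y)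
    (hM : 0 ≤ M) (hp : 0 ≤ p) (hαp : α * p = 1) (h : y ≤ M * x ^ α) : y ^ p ≤ M ^ p * x := by
  calc y ^ p ≤ (M * x ^ α) ^ p := rpow_le_rpow hy h hp
    _ = M ^ p * x := by rw [mul_rpow hM (rpow_nonneg hx _), ← rpow_mul hx, hαp, rpow_one]

theorem sublinear_rate_of_tail_recursion_general (b r : ℕ → ℝ)
    (hb : ∀ s, 0 ≤ b s) (hsum : Summable b)
    (hrS : ∀ t, r t ≤ ∑' s : ℕ, b (t + s))
    (M θ : ℝ) (hM : 0 < M) (hθ : θ ∈ Set.Ioo (0 : ℝ) (1 / 2))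
    (htail : ∃ T₀ : ℕ, ∀ t, T₀ ≤ t → 1 ≤ t →
      (∑' s : ℕ, b (t + s)) ≤ M * (b (t - 1)) ^ (θ / (1 - θ))) :
    ∃ C : ℝ, 0 < C ∧ ∃ T : ℕ, ∀ t, T ≤ t →
      r t ≤ C * (t : ℝ) ^ (-(θ / (1 - 2 * θ))) := by
  obtain ⟨T₀, htail⟩ := htail
  obtain ⟨hθ0, hθ2⟩ := hθ
  set S : ℕ → ℝ := fun t => ∑' s : ℕ, b (t + s)
  have hS : ∀ t, 0 ≤ S t := fun t => tsum_nonneg fun s => hb _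
  set q := (1 - 2 * θ) / θ
  have hq : 0 < q := div_pos (by linarith) hθ0
  have hexp : θ / (1 - θ) * (q + 1) = 1 := by
    have : 1 - θ ≠ 0 := by linarith
    simp only [q]; field_simp; ring
  have hrec : ∀ n,
      S (T₀ + n + 1) ^ (q + 1) ≤ M ^ (q + 1) * (S (T₀ + n) - S (T₀ + n + 1)) := by
    intro n
    rw [tsum_nat_add_sub_tsum_succ_add hsum]
    refine rpow_le_rpow_mul_of_le_mul_rpow (hb _) (hS _) hM.le (by linarith) hexp ?_
    simpa using htail (T₀ + n + 1) (by omega) (by omega)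
  obtain ⟨C, hC, hCS⟩ := exists_pos_le_mul_rpow_neg_inv (S := fun n => S (T₀ + n)) hq
    (by positivity) (fun n => hS _) hrec
  refine ⟨2 ^ q⁻¹ * C, by positivity, 2 * T₀ + 1, fun t ht => ?_⟩
  rw [show θ / (1 - 2 * θ) = q⁻¹ from (inv_div _ _).symm]
  exact (hrS t).trans (le_mul_rpow_neg_of_le_mul_rpow_neg_add hC.le (by positivity) hCS t ht)

/-- Sublinear rate for tails. Let `b_s ≥ 0` be summable with tails
`S t = Σ_{s=t}^∞ b_s`, and suppose `r_t ≤ S_t` for all `t` and eventually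
`S_t ≤ M·b_{t-1}^{θ/(1-θ)}` with `M > 0`, `θ ∈ (0, 1/2)`. Then
`r_t = O(t^{-θ/(1-2θ)})`: there exist `C > 0` and `T` with
`r_t ≤ C · t^{-θ/(1-2θ)}` for all `t ≥ T`. -/
theorem sublinear_rate_of_tail_recursion (b r : ℕ → ℝ)
    (hb : ∀ s, 0 ≤ b s) (hr : ∀ t, 0 ≤ r t) (hsum : Summable b)
    (hrS : ∀ t, r t ≤ ∑' s : ℕ, b (t + s))
    (M θ : ℝ) (hM : 0 < M) (hθ : θ ∈ Set.Ioo (0 : ℝ) (1 / 2))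
    (htail : ∃ T₀ : ℕ, ∀ t, T₀ ≤ t → 1 ≤ t →
      (∑' s : ℕ, b (t + s)) ≤ M * (b (t - 1)) ^ (θ / (1 - θ))) :
    ∃ C : ℝ, 0 < C ∧ ∃ T : ℕ, ∀ t, T ≤ t →
      r t ≤ C * (t : ℝ) ^ (-(θ / (1 - 2 * θ))) :=
  sublinear_rate_of_tail_recursion_general b r hb hsum hrS M θ hM hθ htail
end
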